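/- If k is a descent of the diagram D = D(w) for a permutation w (equivalently k ∈ Des(w)), then s_k D(w) = D(w s_k) is k-full, and consequently R_{k+1} 𝔖_{w s_k} = R_k 𝔖_{w s_k}. -/

import Mathlib

/-!
With `v = w sₖ` we have `v k = w (k+1) < w k = v (k+1)`, so a box `(k, j)` of `D(v)` satisfies
`j < v (k+1)`, which excludes `v⁻¹ j = k+1` and pushes the box down to row `k+1`.
For the polynomial identity, applying `sₖ` to the divided-difference relation for `w` and adding
the result to it gives `(xₖ - xₖ₊₁)(𝔖_v - sₖ 𝔖_v) = 0`, so `𝔖_v` is symmetric in `xₖ, xₖ₊₁`,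
while `R_{k+1} ∘ sₖ = R_k`.
-/

open MvPolynomial

/-- The Bergeron–Sottile operator `R_k` on the polynomial ring `ℤ[x_1, x_2, …]`. -/
noncomputable def Rop (k : ℕ+) : MvPolynomial ℕ+ ℤ →ₐ[ℤ] MvPolynomial ℕ+ ℤ :=
  aeval fun i => if i < k then X i else if i = k then 0 else X (i - 1)

/-- The Rothe diagram of a permutation `w` of the positive integers. -/
def RotheDiagram (w : Equiv.Perm ℕ+) : Set (ℕ+ × ℕ+) :=
  {p | p.2 < w p.1 ∧ p.1 < w.symm p.2}

def IsFull (D : Set (ℕ+ × ℕ+)) (k : ℕ+) : Prop :=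
  ∀ j, (k, j) ∈ D → (k + 1, j) ∈ D

theorem rotheDiagram_mul_swap_isFull {w : Equiv.Perm ℕ+} {k : ℕ+} (hk : w (k + 1) < w k) :
    IsFull (RotheDiagram (w * Equiv.swap k (k + 1))) k := by
  set v := w * Equiv.swap k (k + 1)
  have hvk : v k = w (k + 1) := by simp [v]
  have hvk1 : v (k + 1) = w k := by simp [v]
  rintro j ⟨hj, hkj⟩
  have hj' : j < v (k + 1) := hvk1 ▸ (hvk ▸ hj).trans hk
  refine ⟨hj', (PNat.add_one_le_iff.mpr hkj).lt_of_ne fun h => hj'.ne ?_⟩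
  rw [h, Equiv.apply_symm_apply]

theorem Rop_add_one_comp_rename_swap (k : ℕ+) :
    (Rop (k + 1)).comp (rename (Equiv.swap k (k + 1))) = Rop k := by
  have hk : k < k + 1 := PNat.lt_add_right k 1
  refine MvPolynomial.algHom_ext fun i => ?_
  simp only [Rop, AlgHom.comp_apply, rename_X, aeval_X]
  rcases lt_trichotomy i k with h | rfl | h
  · rw [Equiv.swap_apply_of_ne_of_ne h.ne (h.trans hk).ne]
    simp [h, h.trans hk]
  · simp
  · have h1 : k + 1 ≤ i := PNat.add_one_le_iff.mpr h
    rcases h1.eq_or_lt with rfl | h1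
    · simp [hk, hk.ne', hk.not_gt]
    · rw [Equiv.swap_apply_of_ne_of_ne h.ne' h1.ne']
      simp [h.not_gt, h.ne', h1.not_gt, h1.ne']

theorem rename_swap_eq_self_of_sub_rename_swap_eq {σ R : Type*} [CommRing R] [IsDomain R]
    [DecidableEq σ] {a b : σ} (hab : a ≠ b) {p q : MvPolynomial σ R}
    (h : p - rename (Equiv.swap a b) p = (X a - X b) * q) :
    rename (Equiv.swap a b) q = q := by
  have h' := congrArg (rename (Equiv.swap a b)) h
  simp only [map_sub, map_mul, rename_X, Equiv.swap_apply_left, Equiv.swap_apply_right,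
    rename_rename, ← Equiv.Perm.coe_mul, Equiv.swap_mul_self, Equiv.Perm.coe_one, rename_id_apply] at h'
  have hX : (X a - X b : MvPolynomial σ R) ≠ 0 := sub_ne_zero.mpr (X_injective.ne hab)
  refine (sub_eq_zero.mp ((mul_eq_zero.mp ?_).resolve_left hX)).symm
  linear_combination -(h + h')

theorem stmt16_general (S : Equiv.Perm ℕ+ → MvPolynomial ℕ+ ℤ)
    (hdd : ∀ (w : Equiv.Perm ℕ+) (k : ℕ+), w (k + 1) < w k →
      S w - rename (Equiv.swap k (k + 1)) (S w) =
        (X k - X (k + 1)) * S (w * Equiv.swap k (k + 1)))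
    (w : Equiv.Perm ℕ+)
    (k : ℕ+) (hk : w (k + 1) < w k) :
    (∀ j : ℕ+, (k, j) ∈ RotheDiagram (w * Equiv.swap k (k + 1)) →
        (k + 1, j) ∈ RotheDiagram (w * Equiv.swap k (k + 1))) ∧
      Rop (k + 1) (S (w * Equiv.swap k (k + 1))) =
        Rop k (S (w * Equiv.swap k (k + 1))) := by
  refine ⟨rotheDiagram_mul_swap_isFull hk, ?_⟩
  have hsym : rename (Equiv.swap k (k + 1)) (S (w * Equiv.swap k (k + 1))) =
      S (w * Equiv.swap k (k + 1)) :=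
    rename_swap_eq_self_of_sub_rename_swap_eq (PNat.lt_add_right k 1).ne (hdd w k hk)
  calc Rop (k + 1) (S (w * Equiv.swap k (k + 1)))
      = Rop (k + 1) (rename (Equiv.swap k (k + 1)) (S (w * Equiv.swap k (k + 1)))) := by
        rw [hsym]
    _ = Rop k (S (w * Equiv.swap k (k + 1))) :=
        AlgHom.congr_fun (Rop_add_one_comp_rename_swap k) _

/-- If `k ∈ Des(w)`, then `s_k D(w) = D(w s_k)` is `k`-full, and consequently
`R_{k+1} 𝔖_{w s_k} = R_k 𝔖_{w s_k}`.  (`S` is the Schubert family, characterized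
by the staircase base case and divided-difference recursion.) -/
theorem stmt16 (S : Equiv.Perm ℕ+ → MvPolynomial ℕ+ ℤ)
    (hbase : ∀ (n : ℕ+) (w : Equiv.Perm ℕ+),
      (∀ i : ℕ+, i ≤ n → ((w i : ℕ) + (i : ℕ) = (n : ℕ) + 1)) →
      (∀ i : ℕ+, n < i → w i = i) →
      S w = ∏ i ∈ Finset.Icc (1 : ℕ+) n, X i ^ ((n : ℕ) - (i : ℕ)))
    (hdd : ∀ (w : Equiv.Perm ℕ+) (k : ℕ+), w (k + 1) < w k →
      S w - rename (Equiv.swap k (k + 1)) (S w) =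
        (X k - X (k + 1)) * S (w * Equiv.swap k (k + 1)))
    (w : Equiv.Perm ℕ+) (n : ℕ+) (hw : ∀ i : ℕ+, n < i → w i = i)
    (k : ℕ+) (hk : w (k + 1) < w k) :
    (∀ j : ℕ+, (k, j) ∈ RotheDiagram (w * Equiv.swap k (k + 1)) →
        (k + 1, j) ∈ RotheDiagram (w * Equiv.swap k (k + 1))) ∧
      Rop (k + 1) (S (w * Equiv.swap k (k + 1))) =
        Rop k (S (w * Equiv.swap k (k + 1))) :=
  stmt16_general S hdd w k hk
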